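/- Let D ∈ 𝒟′_n and let D⁻ be D with the edge (v_n,v_t) deleted, where 3 ≤ t ≤ n−1 is the largest index such that (v_n,v_t) ∈ E(D). Let φ and ψ be the Perron vectors of D and D⁻, and set f_i = φ(v_i)/φ(v_n), g_i = ψ(v_i)/ψ(v_n). If t ≥ 5, then for every 3 ≤ k ≤ t−2: (d) (g_{t−k}−f_{t−k})/(t−1)_k ≥ (1/d⁺_D(v_n))·(1 − (4/3)Σ_{j=1}^{k−2} 1/(t−j)_2 − (1/(d⁺_D(v_n)−1))Σ_{j=1}^{k−1} 1/(t−1)_j) > 0; and (e) (g_{t−k}−f_{t−k})/(t−1)_k ≤ 1/d⁺_D(v_n). Here (m)_k = m(m−1)⋯(m−k+1) is the falling factorial. -/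

import Mathlib

/-!
Write `h_v = g_v - f_v` and `d = d⁺(v_n)`. Conditions (i) and (ii) force the rows of
`v_1, …, v_{n-1}` (`v_i → v_j` iff `j ≤ i + 1`, `j ≠ i`), so the stationarity equations of `φ`
and `ψ` at `v_v` differ only in the contribution of `v_n`:
`h_v = h_{v-1}/(v-1) + ∑_{u>v} h_u/u + δ_v`, where `δ_v = 0` for `v > t`, `δ_t = -1/d` and
`0 ≤ δ_v ≤ 1/(d(d-1))` for `v < t`. Solved for `h_{v-1}` from the top, this shows that `h`
vanishes on `v_t, …, v_n`, and that below `v_t` the quotient `q_k = h_{t-k}/(t-1)_k` satisfies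
`q_1 = 1/d` and `q_{k+1} = q_k - (s_k + δ_{t-k})/(t-1)_k` with `s_k = ∑_{j<k} h_{t-j}/(t-j)`.
An induction on `k` keeps `q_k` above the (positive) lower bound, hence `s_k ≥ 0` and
`q_k ≤ 1/d`, hence `s_k ≤ (1/d) ∑_{j<k-1} (t-1)_j ≤ (4/(3d)) (t-1)_{k-2}`; these increments add
up to the bound.
-/

namespace PR

/-- Out-degree of `u` in the digraph on vertex set `{1,…,n} ⊆ ℕ` with adjacency `E`. -/
def outDeg (n : ℕ) (E : ℕ → ℕ → Bool) (u : ℕ) : ℕ :=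
  ((Finset.Icc 1 n).filter (fun v => E u v)).card

/-- In-degree of `u`. -/
def inDeg (n : ℕ) (E : ℕ → ℕ → Bool) (u : ℕ) : ℕ :=
  ((Finset.Icc 1 n).filter (fun v => E v u)).card

/-- `E` is a simple digraph on the vertex set `{1,…,n}`: all edges join distinct
vertices of `{1,…,n}` (no loops; the `Bool`-valued adjacency precludes multi-edges). -/
def IsDigraph (n : ℕ) (E : ℕ → ℕ → Bool) : Prop :=
  ∀ u v, E u v = true → u ∈ Finset.Icc 1 n ∧ v ∈ Finset.Icc 1 n ∧ u ≠ v

/-- `WalkLen E k u v` : there is a directed walk of length `k` from `u` to `v`. -/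
def WalkLen (E : ℕ → ℕ → Bool) : ℕ → ℕ → ℕ → Prop
  | 0, u, v => u = v
  | (k+1), u, v => ∃ w, E u w = true ∧ WalkLen E k w v

/-- Every vertex reaches every other vertex by a directed walk. -/
def StronglyConnected (n : ℕ) (E : ℕ → ℕ → Bool) : Prop :=
  ∀ u ∈ Finset.Icc 1 n, ∀ v ∈ Finset.Icc 1 n, ∃ k, WalkLen E k u v

/-- Directed distance: number of edges in a shortest directed path from `u` to `v`. -/
noncomputable def dist (E : ℕ → ℕ → Bool) (u v : ℕ) : ℕ :=
  sInf {k | WalkLen E k u v}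

/-- Distance between two sets of vertices. -/
noncomputable def setDist (E : ℕ → ℕ → Bool) (A B : Set ℕ) : ℕ :=
  sInf {k | ∃ a ∈ A, ∃ b ∈ B, dist E a b = k}

/-- `φ` is the Perron vector of the simple random walk on the digraph: a positive
probability distribution on `{1,…,n}` which is stationary, i.e. `φ P = φ` where
`P(u,v) = 1/d⁺(u)` for edges `(u,v)` and `0` otherwise. -/
def IsPerron (n : ℕ) (E : ℕ → ℕ → Bool) (φ : ℕ → ℝ) : Prop :=
  (∀ v ∈ Finset.Icc 1 n, 0 < φ v) ∧
  (∑ v ∈ Finset.Icc 1 n, φ v = 1) ∧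
  (∀ v ∈ Finset.Icc 1 n, φ v =
    ∑ u ∈ Finset.Icc 1 n, if E u v then φ u / (outDeg n E u : ℝ) else 0)

/-- The principal ratio `γ = (max_u φ(u)) / (min_u φ(u))` of a vector `φ` on `{1,…,n}`. -/
noncomputable def pratio (n : ℕ) (φ : ℕ → ℝ) : ℝ :=
  if h : (Finset.Icc 1 n).Nonempty then
    ((Finset.Icc 1 n).sup' h φ) / ((Finset.Icc 1 n).inf' h φ)
  else 0

/-- Vertices attaining the maximum of `φ`. -/
def Vmax (n : ℕ) (φ : ℕ → ℝ) : Set ℕ :=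
  {v | v ∈ Finset.Icc 1 n ∧ ∀ u ∈ Finset.Icc 1 n, φ u ≤ φ v}

/-- Vertices attaining the minimum of `φ`. -/
def Vmin (n : ℕ) (φ : ℕ → ℝ) : Set ℕ :=
  {v | v ∈ Finset.Icc 1 n ∧ ∀ u ∈ Finset.Icc 1 n, φ v ≤ φ u}

/-- Membership in the family `𝒟′_n` (together with the Perron vector `φ` of `D`). -/
def memDn' (n : ℕ) (E : ℕ → ℕ → Bool) (φ : ℕ → ℝ) : Prop :=
  IsDigraph n E ∧ StronglyConnected n E ∧ IsPerron n E φ ∧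
  -- (i) v_1, v_2, …, v_n is a shortest directed path from v_1 to v_n, of length n-1
  (∀ i, 1 ≤ i → i < n → E i (i+1) = true) ∧ dist E 1 n = n - 1 ∧
  -- (ii) d⁺(v_i) = i for every 2 ≤ i ≤ n-1
  (∀ i, 2 ≤ i → i ≤ n - 1 → outDeg n E i = i) ∧
  -- (iii) v_2 ∈ V_max, v_n ∈ V_min, dist(V_max,V_min) = dist(v_2,v_n) = n-2
  (2:ℕ) ∈ Vmax n φ ∧ n ∈ Vmin n φ ∧
  setDist E (Vmax n φ) (Vmin n φ) = n - 2 ∧ dist E 2 n = n - 2 ∧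
  -- (iv) d⁺(v_n) ≥ 2
  2 ≤ outDeg n E n ∧
  -- (v) N⁺(v_n) ≠ {v_1, v_2}
  ¬ (∀ v, E n v = true ↔ (v = 1 ∨ v = 2))

open Finset

lemma three_mul_sum_descFactorial_le {N m : ℕ} (h : m + 3 ≤ N) :
    3 * ∑ j ∈ range (m + 1), N.descFactorial j ≤ 4 * N.descFactorial m := by
  induction m with
  | zero => simp
  | succ m ih =>
    have hm := ih (by omega)
    have hN : 4 * N.descFactorial m ≤ (N - m) * N.descFactorial m :=
      Nat.mul_le_mul_right _ (by omega)
    rw [sum_range_succ, Nat.descFactorial_succ]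
    linarith

lemma two_pow_le_descFactorial {N j : ℕ} (hN : 4 ≤ N) (hj : 1 ≤ j) (hjN : j + 2 ≤ N) :
    2 ^ (j + 1) ≤ N.descFactorial j := by
  induction j, hj using Nat.le_induction with
  | base => simpa using hN
  | succ j hj ih =>
    rw [Nat.descFactorial_succ, pow_succ, mul_comm]
    exact Nat.mul_le_mul (by omega) (ih (by omega))

lemma sum_inv_descFactorial_le_half {N m : ℕ} (hN : 4 ≤ N) (hm : m + 2 ≤ N) :
    ∑ j ∈ Icc 1 m, 1 / (N.descFactorial j : ℝ) ≤ 1 / 2 := by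
  have geom : ∀ m, ∑ j ∈ Icc 1 m, (1 / 2 : ℝ) ^ (j + 1) = 1 / 2 - (1 / 2) ^ (m + 1) := by
    intro m
    induction m with
    | zero => simp
    | succ m ih => rw [sum_Icc_succ_top (by omega), ih]; ring
  calc ∑ j ∈ Icc 1 m, 1 / (N.descFactorial j : ℝ)
      ≤ ∑ j ∈ Icc 1 m, (1 / 2 : ℝ) ^ (j + 1) := by
        refine sum_le_sum fun j hj => ?_
        rw [mem_Icc] at hj
        rw [one_div_pow, ← Nat.cast_ofNat, ← Nat.cast_pow]
        gcongr
        exact two_pow_le_descFactorial hN hj.1 (by omega)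
    _ ≤ 1 / 2 := by rw [geom]; linarith [pow_pos (by norm_num : (0 : ℝ) < 1 / 2) (m + 1)]

lemma sum_inv_descFactorial_two {t m : ℕ} (hm : m + 2 ≤ t) :
    ∑ j ∈ Icc 1 m, 1 / ((t - j).descFactorial 2 : ℝ) =
      1 / ((t - 1 - m : ℕ) : ℝ) - 1 / ((t - 1 : ℕ) : ℝ) := by
  induction m with
  | zero => simp
  | succ m ih =>
    obtain ⟨a, rfl⟩ : ∃ a, t = m + a + 3 := ⟨t - m - 3, by omega⟩
    rw [sum_Icc_succ_top (by omega), ih (by omega), show m + a + 3 - (m + 1) = a + 1 + 1 by omega,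
      show m + a + 3 - 1 - m = a + 1 + 1 by omega, show m + a + 3 - 1 - (m + 1) = a + 1 by omega,
      Nat.succ_descFactorial_succ, Nat.descFactorial_one]
    push_cast
    field_simp
    ring

noncomputable def lowerBound (t : ℕ) (d : ℝ) (k : ℕ) : ℝ :=
  (1 / d) * (1 - 4 / 3 * ∑ j ∈ Icc 1 (k - 2), 1 / ((t - j).descFactorial 2 : ℝ)
    - (1 / (d - 1)) * ∑ j ∈ Icc 1 (k - 1), 1 / ((t - 1).descFactorial j : ℝ))

lemma lowerBound_pos {t k : ℕ} {d : ℝ} (ht : 5 ≤ t) (hd : 2 ≤ d) (hkt : k + 2 ≤ t) :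
    0 < lowerBound t d k := by
  have hA : ∑ j ∈ Icc 1 (k - 2), 1 / ((t - j).descFactorial 2 : ℝ) ≤ 1 / 3 := by
    rw [sum_inv_descFactorial_two (by omega)]
    have h3 : (3 : ℝ) ≤ ((t - 1 - (k - 2) : ℕ) : ℝ) := by exact_mod_cast (by omega)
    have : 1 / ((t - 1 - (k - 2) : ℕ) : ℝ) ≤ 1 / 3 := by gcongr
    have : (0 : ℝ) ≤ 1 / ((t - 1 : ℕ) : ℝ) := by positivity
    linarith
  have hB := sum_inv_descFactorial_le_half (N := t - 1) (m := k - 1) (by omega) (by omega)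
  have hB0 : 0 ≤ ∑ j ∈ Icc 1 (k - 1), 1 / ((t - 1).descFactorial j : ℝ) := by positivity
  have hd1 : 1 / (d - 1) ≤ 1 := by rw [div_le_one (by linarith)]; linarith
  have : 1 / (d - 1) * ∑ j ∈ Icc 1 (k - 1), 1 / ((t - 1).descFactorial j : ℝ) ≤ 1 / 2 := by
    nlinarith
  unfold lowerBound
  have : (0 : ℝ) < 1 / d := by positivity
  nlinarith

lemma lowerBound_one (t : ℕ) (d : ℝ) : lowerBound t d 1 = 1 / d := by
  simp [lowerBound]

lemma lowerBound_add_two_le {t m : ℕ} {d : ℝ} (hd : 0 < d) (hm : m + 4 ≤ t) :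
    lowerBound t d (m + 2) ≤ lowerBound t d (m + 1) -
      (1 / d * ∑ j ∈ range m, ((t - 1).descFactorial j : ℝ) + 1 / d * (1 / (d - 1))) /
        (t - 1).descFactorial (m + 1) := by
  suffices h : 1 / d * (∑ j ∈ range m, ((t - 1).descFactorial j : ℝ)) /
      (t - 1).descFactorial (m + 1) ≤
      1 / d * (4 / 3) * (∑ j ∈ Icc 1 m, 1 / ((t - j).descFactorial 2 : ℝ) -
        ∑ j ∈ Icc 1 (m - 1), 1 / ((t - j).descFactorial 2 : ℝ)) by
    simp only [lowerBound, Nat.add_sub_cancel, show m + 2 - 2 = m by omega,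
      show m + 2 - 1 = m + 1 by omega, show m + 1 - 2 = m - 1 by omega]
    rw [sum_Icc_succ_top (by omega), add_div]
    linarith [show 1 / d * (1 / (d - 1)) / ((t - 1).descFactorial (m + 1) : ℝ) =
      1 / d * (1 / (d - 1) * (1 / ((t - 1).descFactorial (m + 1) : ℝ))) by ring]
  rcases m with _ | p
  · simp
  rw [Nat.add_sub_cancel, sum_Icc_succ_top (by omega), add_sub_cancel_left]
  -- `(t-1)_{p+2} = (t-1)_p · (t-(p+1))_2` and `∑_{j ≤ p} (t-1)_j ≤ (4/3) (t-1)_p`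
  have hsplit := Nat.descFactorial_mul_descFactorial (n := t - 1) (k := p) (m := p + 2) (by omega)
  rw [show p + 2 - p = 2 by omega, show t - 1 - p = t - (p + 1) by omega] at hsplit
  have hsum : 3 * (∑ j ∈ range (p + 1), ((t - 1).descFactorial j : ℝ)) ≤
      4 * (t - 1).descFactorial p := by
    exact_mod_cast three_mul_sum_descFactorial_le (N := t - 1) (m := p) (by omega)
  have hD : (0 : ℝ) < (t - (p + 1)).descFactorial 2 := by
    exact_mod_cast Nat.descFactorial_pos.2 (by omega)
  have hFp : (0 : ℝ) < (t - 1).descFactorial p := by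
    exact_mod_cast Nat.descFactorial_pos.2 (by omega)
  rw [← hsplit, Nat.cast_mul, div_le_iff₀ (by positivity)]
  field_simp
  nlinarith

theorem recurrence_bounds {t : ℕ} {d : ℝ} (ht : 5 ≤ t) (hd : 2 ≤ d) {x s c : ℕ → ℝ}
    (hx0 : x 0 = 0) (hs0 : s 0 = 0) (hc0 : c 0 = -(1 / d))
    (hc : ∀ k, 1 ≤ k → 0 ≤ c k ∧ c k ≤ 1 / (d - 1) - 1 / d)
    (hx : ∀ k, k + 3 ≤ t → x (k + 1) = ((t - 1 - k : ℕ) : ℝ) * (x k - s k - c k))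
    (hs : ∀ k, k + 3 ≤ t → s (k + 1) = s k + x k / ((t - k : ℕ) : ℝ)) {k : ℕ}
    (hk : 1 ≤ k) (hkt : k + 2 ≤ t) :
    lowerBound t d k ≤ x k / (t - 1).descFactorial k ∧
      x k / (t - 1).descFactorial k ≤ 1 / d := by
  set F : ℕ → ℝ := fun k => (t - 1).descFactorial k with hFdef
  have hF : ∀ k, k + 1 ≤ t → 0 < F k := fun k hk => by
    simp only [hFdef, Nat.cast_pos, Nat.descFactorial_pos]
    omega
  have hFsucc : ∀ k, F (k + 1) = ((t - 1 - k : ℕ) : ℝ) * F k := fun k => by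
    simp only [hFdef, Nat.descFactorial_succ, Nat.cast_mul]
  have hq : ∀ k, k + 3 ≤ t → x (k + 1) / F (k + 1) = x k / F k - (s k + c k) / F k :=
      fun k hk => by
    have : ((t - 1 - k : ℕ) : ℝ) ≠ 0 := by exact_mod_cast (by omega : t - 1 - k ≠ 0)
    have := hF k (by omega)
    rw [hx k hk, hFsucc]
    field_simp
    ring
  have hs' : ∀ m, m + 4 ≤ t → s (m + 2) = s (m + 1) + x (m + 1) / F (m + 1) * F m :=
      fun m hm => by
    have : ((t - 1 - m : ℕ) : ℝ) ≠ 0 := by exact_mod_cast (by omega : t - 1 - m ≠ 0)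
    have := hF m (by omega)
    rw [hs (m + 1) (by omega), hFsucc, show t - (m + 1) = t - 1 - m by omega]
    field_simp
  have ha : 1 / (d - 1) - 1 / d = 1 / d * (1 / (d - 1)) := by
    field_simp [show d - 1 ≠ 0 by linarith, show d ≠ 0 by linarith]
    ring
  suffices h : ∀ m, m + 3 ≤ t →
      lowerBound t d (m + 1) ≤ x (m + 1) / F (m + 1) ∧ x (m + 1) / F (m + 1) ≤ 1 / d ∧
        0 ≤ s (m + 1) ∧ s (m + 1) ≤ 1 / d * ∑ j ∈ range m, F j by
    obtain ⟨m, rfl⟩ : ∃ m, k = m + 1 := ⟨k - 1, by omega⟩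
    exact ⟨(h m (by omega)).1, (h m (by omega)).2.1⟩
  intro m
  induction m with
  | zero =>
    intro _
    have hx1 : x 1 / F 1 = 1 / d := by
      rw [hq 0 (by omega), hx0, hs0, hc0]
      simp [hFdef]
    have hs1 : s 1 = 0 := by rw [hs 0 (by omega), hx0, hs0]; simp
    simp [hx1, hs1, lowerBound_one]
  | succ m ih =>
    intro hm
    obtain ⟨hlow, hup, hsnn, hsup⟩ := ih (by omega)
    obtain ⟨hcnn, hca⟩ := hc (m + 1) (by omega)
    have hFm := hF m (by omega)
    have hFm1 := hF (m + 1) (by omega)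
    have hqpos : 0 < x (m + 1) / F (m + 1) :=
      (lowerBound_pos ht hd (by omega)).trans_le hlow
    rw [hq (m + 1) (by omega), hs' m hm, sum_range_succ]
    refine ⟨?_, ?_, ?_, ?_⟩
    · calc lowerBound t d (m + 2)
          ≤ lowerBound t d (m + 1) -
              (1 / d * ∑ j ∈ range m, F j + 1 / d * (1 / (d - 1))) / F (m + 1) :=
            lowerBound_add_two_le (by linarith) (by omega)
        _ ≤ x (m + 1) / F (m + 1) - (s (m + 1) + c (m + 1)) / F (m + 1) := by
            gcongr
            linarith
    · have : 0 ≤ (s (m + 1) + c (m + 1)) / F (m + 1) := by positivity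
      linarith
    · positivity
    · have : x (m + 1) / F (m + 1) * F m ≤ 1 / d * F m := by gcongr
      linarith

lemma walkLen_add {E : ℕ → ℕ → Bool} {p q a b c : ℕ} (hab : WalkLen E p a b)
    (hbc : WalkLen E q b c) : WalkLen E (p + q) a c := by
  induction p generalizing a with
  | zero => cases hab; simpa using hbc
  | succ p ih =>
    obtain ⟨w, hw, hwb⟩ := hab
    rw [Nat.add_right_comm]
    exact ⟨w, hw, ih hwb⟩

lemma walkLen_of_path {n : ℕ} {E : ℕ → ℕ → Bool}
    (hpath : ∀ i, 1 ≤ i → i < n → E i (i + 1) = true) {a m : ℕ} (ha : 1 ≤ a)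
    (hm : a + m ≤ n) :
    WalkLen E m a (a + m) := by
  induction m generalizing a with
  | zero => rfl
  | succ m ih =>
    refine ⟨a + 1, hpath a ha (by omega), ?_⟩
    have := ih (a := a + 1) (by omega) (by omega)
    rwa [Nat.add_right_comm] at this

section Staircase

variable {n : ℕ} {E : ℕ → ℕ → Bool}

lemma le_succ_of_adj (hE : IsDigraph n E) (hpath : ∀ i, 1 ≤ i → i < n → E i (i + 1) = true)
    (hdist : dist E 1 n = n - 1) {i j : ℕ} (hi : 1 ≤ i) (hij : E i j = true) : j ≤ i + 1 := by
  obtain ⟨hi', hj, -⟩ := hE i j hij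
  rw [mem_Icc] at hi' hj
  by_contra! hji
  -- otherwise `1 → ⋯ → i → j → ⋯ → n` is a walk shorter than `n - 1`
  have hwalk : WalkLen E ((i - 1) + ((n - j) + 1)) 1 n := by
    have h1 : WalkLen E (i - 1) 1 i := by
      simpa [Nat.add_sub_cancel' hi] using
        walkLen_of_path hpath (a := 1) (m := i - 1) le_rfl (by omega)
    have h2 : WalkLen E (n - j) j n := by
      simpa [Nat.add_sub_cancel' hj.2] using
        walkLen_of_path hpath (a := j) (m := n - j) hj.1 (by omega)
    exact walkLen_add h1 ⟨j, hij, h2⟩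
  have : dist E 1 n ≤ (i - 1) + ((n - j) + 1) := Nat.sInf_le hwalk
  omega

/-- The rows `v_1, …, v_{n-1}` forced by conditions (i) and (ii) of `𝒟′_n`. -/
def IsStaircase (n : ℕ) (E : ℕ → ℕ → Bool) : Prop :=
  ∀ i, 1 ≤ i → i ≤ n - 1 → ∀ j, E i j = true ↔ 1 ≤ j ∧ j ≤ i + 1 ∧ j ≠ i

lemma isStaircase_of_memDn' {φ : ℕ → ℝ} (hD : memDn' n E φ) : IsStaircase n E := by
  obtain ⟨hE, -, -, hpath, hdist, hdeg, -⟩ := hD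
  intro i hi hin
  have hsub : (Icc 1 n).filter (fun j => E i j) ⊆ (Icc 1 (i + 1)).erase i := by
    intro j hj
    rw [mem_filter] at hj
    rw [mem_erase, mem_Icc]
    exact ⟨(hE i j hj.2).2.2.symm, (mem_Icc.1 hj.1).1, le_succ_of_adj hE hpath hdist hi hj.2⟩
  have hcard : i ≤ ((Icc 1 n).filter (fun j => E i j)).card := by
    rcases (by omega : i = 1 ∨ 2 ≤ i) with rfl | hi2
    · exact card_pos.2
        ⟨2, mem_filter.2 ⟨mem_Icc.2 ⟨by omega, by omega⟩, hpath 1 le_rfl (by omega)⟩⟩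
    · exact (hdeg i hi2 hin).ge
  have heq := eq_of_subset_of_card_le hsub (by
    rw [card_erase_of_mem (mem_Icc.2 ⟨hi, by omega⟩), Nat.card_Icc]
    omega)
  intro j
  constructor
  · intro hij
    have hj := heq ▸ mem_filter.2 ⟨(hE i j hij).2.1, hij⟩
    rw [mem_erase, mem_Icc] at hj
    omega
  · intro hj
    have hj' : j ∈ (Icc 1 (i + 1)).erase i := by rw [mem_erase, mem_Icc]; omega
    rw [← heq, mem_filter] at hj'
    exact hj'.2

lemma IsStaircase.outDeg_eq (hE : IsStaircase n E) {i : ℕ} (hi : 1 ≤ i) (hin : i ≤ n - 1) :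
    outDeg n E i = i := by
  have : (Icc 1 n).filter (fun j => E i j) = (Icc 1 (i + 1)).erase i := by
    ext j
    simp only [mem_filter, mem_erase, mem_Icc, hE i hi hin j]
    omega
  rw [outDeg, this, card_erase_of_mem (mem_Icc.2 ⟨hi, by omega⟩), Nat.card_Icc]
  omega

lemma IsStaircase.filter_adj_eq (hE : IsStaircase n E) {v : ℕ} (hv : 2 ≤ v) (hvn : v ≤ n) :
    (Icc 1 (n - 1)).filter (fun u => E u v) = insert (v - 1) (Icc (v + 1) (n - 1)) := by
  ext u
  simp only [mem_filter, mem_insert, mem_Icc]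
  constructor
  · rintro ⟨hu, huv⟩
    rw [hE u hu.1 hu.2] at huv
    omega
  · intro h
    have hu : 1 ≤ u ∧ u ≤ n - 1 := by omega
    exact ⟨hu, (hE u hu.1 hu.2 v).2 (by omega)⟩

lemma IsStaircase.perron_ratio_eq (hE : IsStaircase n E) {μ : ℕ → ℝ} (hμ : IsPerron n E μ)
    {v : ℕ} (hv : 2 ≤ v) (hvn : v ≤ n) :
    μ v / μ n = μ (v - 1) / μ n / ((v - 1 : ℕ) : ℝ) +
      ∑ u ∈ Icc (v + 1) (n - 1), μ u / μ n / u +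
        if E n v then 1 / (outDeg n E n : ℝ) else 0 := by
  obtain ⟨hpos, -, hstat⟩ := hμ
  have hn : μ n ≠ 0 := (hpos n (mem_Icc.2 ⟨by omega, le_rfl⟩)).ne'
  have hsplit : Icc 1 n = insert n (Icc 1 (n - 1)) := by
    ext
    simp only [mem_insert, mem_Icc]
    omega
  rw [hstat v (mem_Icc.2 ⟨by omega, hvn⟩), hsplit, sum_insert (by simp; omega), ← sum_filter,
    hE.filter_adj_eq hv hvn, sum_insert (by simp), hE.outDeg_eq (i := v - 1) (by omega) (by omega),
    sum_congr rfl fun u hu => by rw [hE.outDeg_eq (by simp at hu; omega) (mem_Icc.1 hu).2]]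
  simp only [← sum_div, div_right_comm _ (μ n)]
  split_ifs <;> field_simp <;> ring

lemma IsStaircase.ratio_sub_eq {E' : ℕ → ℕ → Bool} (hE : IsStaircase n E)
    (hE' : IsStaircase n E') {φ ψ : ℕ → ℝ} (hφ : IsPerron n E φ) (hψ : IsPerron n E' ψ)
    {v : ℕ} (hv : 2 ≤ v) (hvn : v ≤ n) :
    ψ v / ψ n - φ v / φ n =
      (ψ (v - 1) / ψ n - φ (v - 1) / φ n) / ((v - 1 : ℕ) : ℝ) +
        ∑ u ∈ Icc (v + 1) (n - 1), (ψ u / ψ n - φ u / φ n) / u +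
        ((if E' n v then 1 / (outDeg n E' n : ℝ) else 0) -
          if E n v then 1 / (outDeg n E n : ℝ) else 0) := by
  rw [hE'.perron_ratio_eq hψ hv hvn, hE.perron_ratio_eq hφ hv hvn]
  simp only [sub_div, sum_sub_distrib]
  ring

end Staircase

def deleteEdge (E : ℕ → ℕ → Bool) (a b : ℕ) : ℕ → ℕ → Bool :=
  fun u v => E u v && !(u == a && v == b)

section DeleteEdge

variable {E : ℕ → ℕ → Bool} {a b : ℕ}

lemma deleteEdge_of_ne_left {u : ℕ} (h : u ≠ a) (v : ℕ) : deleteEdge E a b u v = E u v := by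
  simp [deleteEdge, h]

lemma deleteEdge_of_ne_right (u : ℕ) {v : ℕ} (h : v ≠ b) : deleteEdge E a b u v = E u v := by
  simp [deleteEdge, h]

lemma IsStaircase.deleteEdge {n : ℕ} (hE : IsStaircase n E) (b : ℕ) :
    IsStaircase n (deleteEdge E n b) := fun i hi hin j => by
  rw [deleteEdge_of_ne_left (by omega)]
  exact hE i hi hin j

lemma outDeg_deleteEdge {n : ℕ} (hab : E a b = true) (hb : b ∈ Icc 1 n) :
    outDeg n (deleteEdge E a b) a = outDeg n E a - 1 := by
  rw [outDeg, outDeg, ← card_erase_of_mem (mem_filter.2 ⟨hb, hab⟩)]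
  congr 1
  ext v
  by_cases hv : v = b
  · simp [hv, deleteEdge]
  · simp [hv, deleteEdge_of_ne_right]

end DeleteEdge

lemma eq_zero_of_backward_recurrence {h : ℕ → ℝ} {t n : ℕ} (ht : 1 ≤ t) (hn : h n = 0)
    (hrec : ∀ v, t < v → v ≤ n →
      h v = h (v - 1) / ((v - 1 : ℕ) : ℝ) + ∑ u ∈ Icc (v + 1) (n - 1), h u / u) :
    ∀ u, t ≤ u → u ≤ n → h u = 0 := by
  suffices ∀ k u, n - u ≤ k → t ≤ u → u ≤ n → h u = 0 from fun u => this _ u le_rfl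
  intro k
  induction k with
  | zero => intro u hk _ hun; rwa [show u = n by omega]
  | succ k ih =>
    intro u hk htu hun
    rcases eq_or_lt_of_le hun with rfl | hun
    · exact hn
    have hsum : ∑ w ∈ Icc (u + 1 + 1) (n - 1), h w / w = 0 :=
      sum_eq_zero fun w hw => by
        rw [mem_Icc] at hw
        rw [ih w (by omega) (by omega) (by omega), zero_div]
    have hu : ((u : ℕ) : ℝ) ≠ 0 := by exact_mod_cast (by omega : u ≠ 0)
    have := hrec (u + 1) (by omega) hun
    rw [ih (u + 1) (by omega) (by omega) hun, hsum, Nat.add_sub_cancel] at this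
    simpa [hu] using this.symm

theorem ratio_sub_bounds {n t : ℕ} {E : ℕ → ℕ → Bool} {φ ψ : ℕ → ℝ}
    (hE : IsStaircase n E) (hnn : E n n = false) (hφ : IsPerron n E φ)
    (hψ : IsPerron n (deleteEdge E n t) ψ)
    (ht : 5 ≤ t) (htn : t ≤ n - 1) (hedge : E n t = true)
    (htmax : ∀ t', t < t' → t' ≤ n - 1 → E n t' = false) (hd : 2 ≤ outDeg n E n)
    {k : ℕ} (hk : 1 ≤ k) (hkt : k + 2 ≤ t) :
    lowerBound t (outDeg n E n : ℝ) k ≤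
        (ψ (t - k) / ψ n - φ (t - k) / φ n) / (t - 1).descFactorial k ∧
      (ψ (t - k) / ψ n - φ (t - k) / φ n) / (t - 1).descFactorial k ≤
        1 / (outDeg n E n : ℝ) := by
  set d : ℝ := (outDeg n E n : ℝ) with hd_def
  have hdR : (2 : ℝ) ≤ d := by rw [hd_def]; exact_mod_cast hd
  have hd' : (outDeg n (deleteEdge E n t) n : ℝ) = d - 1 := by
    rw [outDeg_deleteEdge hedge (mem_Icc.2 ⟨by omega, by omega⟩), Nat.cast_sub (by omega)]
    simp [d]
  set h : ℕ → ℝ := fun v => ψ v / ψ n - φ v / φ n with hh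
  set δ : ℕ → ℝ := fun v =>
    (if deleteEdge E n t n v then 1 / (d - 1) else 0) - if E n v then 1 / d else 0 with hδ
  have hrec : ∀ v, 2 ≤ v → v ≤ n →
      h v = h (v - 1) / ((v - 1 : ℕ) : ℝ) + ∑ u ∈ Icc (v + 1) (n - 1), h u / u + δ v :=
    fun v hv hvn => by simpa only [hd'] using hE.ratio_sub_eq (hE.deleteEdge t) hφ hψ hv hvn
  have hδ0 : ∀ v, t < v → v ≤ n → δ v = 0 := by
    intro v htv hvn
    have hEv : E n v = false := by
      rcases eq_or_lt_of_le hvn with rfl | hvn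
      · exact hnn
      · exact htmax v htv (by omega)
    simp [hδ, deleteEdge_of_ne_right n (by omega : v ≠ t), hEv]
  have hn : h n = 0 := by
    have hnmem : n ∈ Icc 1 n := mem_Icc.2 ⟨by omega, le_rfl⟩
    simp [hh, (hψ.1 n hnmem).ne', (hφ.1 n hnmem).ne']
  have hzero := eq_zero_of_backward_recurrence (by omega : 1 ≤ t) hn
    (fun v htv hvn => by rw [hrec v (by omega) hvn, hδ0 v htv hvn, add_zero])
  refine recurrence_bounds (x := fun k => h (t - k))
    (s := fun k => ∑ u ∈ Icc (t - k + 1) (n - 1), h u / u) (c := fun k => δ (t - k)) ht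
    hdR (hzero t le_rfl (by omega)) ?_ ?_ ?_ ?_ ?_ hk hkt
  · exact sum_eq_zero fun u hu => by
      rw [hzero u (by simp at hu; omega) (by simp at hu; omega), zero_div]
  · simp [hδ, deleteEdge, hedge]
  · intro j hj
    simp only [hδ, deleteEdge_of_ne_right n (by omega : t - j ≠ t)]
    have : 1 / d ≤ 1 / (d - 1) := one_div_le_one_div_of_le (by linarith) (by linarith)
    split_ifs <;> constructor <;> linarith
  · intro j hj
    have := hrec (t - j) (by omega) (by omega)
    have hpos : ((t - (j + 1) : ℕ) : ℝ) ≠ 0 := by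
      exact_mod_cast (by omega : t - (j + 1) ≠ 0)
    rw [show t - j - 1 = t - (j + 1) by omega] at this
    simp only [show t - 1 - j = t - (j + 1) by omega, this]
    field_simp
    ring
  · intro j hj
    simp only [show t - (j + 1) + 1 = t - j by omega]
    rw [← insert_Icc_add_one_left_eq_Icc (by omega), sum_insert (by simp)]
    ring

theorem stmt12_general (n t : ℕ) (E : ℕ → ℕ → Bool) (φ ψ : ℕ → ℝ)
    (hD : memDn' n E φ) (ht5 : 5 ≤ t)
    (htn : t ≤ n - 1) (hedge : E n t = true)
    (htmax : ∀ t', t < t' → t' ≤ n - 1 → E n t' = false)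
    (hψ : IsPerron n (fun u v => E u v && !(u == n && v == t)) ψ) :
    ∀ k, 3 ≤ k → k ≤ t - 2 →
      -- (d)
      ((ψ (t-k) / ψ n - φ (t-k) / φ n) / ((t-1).descFactorial k : ℝ) ≥
        (1 / (outDeg n E n : ℝ)) *
          (1 - 4/3 * ∑ j ∈ Finset.Icc 1 (k-2), 1 / ((t-j).descFactorial 2 : ℝ)
             - (1 / ((outDeg n E n : ℝ) - 1)) *
                ∑ j ∈ Finset.Icc 1 (k-1), 1 / ((t-1).descFactorial j : ℝ))) ∧
      (0 < (1 / (outDeg n E n : ℝ)) *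
          (1 - 4/3 * ∑ j ∈ Finset.Icc 1 (k-2), 1 / ((t-j).descFactorial 2 : ℝ)
             - (1 / ((outDeg n E n : ℝ) - 1)) *
                ∑ j ∈ Finset.Icc 1 (k-1), 1 / ((t-1).descFactorial j : ℝ))) ∧
      -- (e)
      ((ψ (t-k) / ψ n - φ (t-k) / φ n) / ((t-1).descFactorial k : ℝ) ≤
        1 / (outDeg n E n : ℝ)) := by
  have hE := isStaircase_of_memDn' hD
  obtain ⟨hdig, -, hφ, -, -, -, -, -, -, -, hd, -⟩ := hD
  have hnn : E n n = false := Bool.eq_false_iff.2 fun h => (hdig n n h).2.2 rfl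
  intro k hk hkt
  obtain ⟨hlow, hup⟩ :=
    ratio_sub_bounds hE hnn hφ hψ ht5 htn hedge htmax hd (k := k) (by omega) (by omega)
  exact ⟨hlow, lowerBound_pos ht5 (by exact_mod_cast hd) (by omega), hup⟩

/-- Proposition 11 (d),(e): for `t ≥ 5` and `3 ≤ k ≤ t-2`, bounds on
`(g_{t-k} - f_{t-k}) / (t-1)_k` for `D ∈ 𝒟′_n` and `D⁻ = D - (v_n,v_t)`. -/
theorem stmt12 (n t : ℕ) (E : ℕ → ℕ → Bool) (φ ψ : ℕ → ℝ)
    (hD : memDn' n E φ) (ht5 : 5 ≤ t)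
    (ht3 : 3 ≤ t) (htn : t ≤ n - 1) (hedge : E n t = true)
    (htmax : ∀ t', t < t' → t' ≤ n - 1 → E n t' = false)
    (hψ : IsPerron n (fun u v => E u v && !(u == n && v == t)) ψ) :
    ∀ k, 3 ≤ k → k ≤ t - 2 →
      -- (d)
      ((ψ (t-k) / ψ n - φ (t-k) / φ n) / ((t-1).descFactorial k : ℝ) ≥
        (1 / (outDeg n E n : ℝ)) *
          (1 - 4/3 * ∑ j ∈ Finset.Icc 1 (k-2), 1 / ((t-j).descFactorial 2 : ℝ)
             - (1 / ((outDeg n E n : ℝ) - 1)) *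
                ∑ j ∈ Finset.Icc 1 (k-1), 1 / ((t-1).descFactorial j : ℝ))) ∧
      (0 < (1 / (outDeg n E n : ℝ)) *
          (1 - 4/3 * ∑ j ∈ Finset.Icc 1 (k-2), 1 / ((t-j).descFactorial 2 : ℝ)
             - (1 / ((outDeg n E n : ℝ) - 1)) *
                ∑ j ∈ Finset.Icc 1 (k-1), 1 / ((t-1).descFactorial j : ℝ))) ∧
      -- (e)
      ((ψ (t-k) / ψ n - φ (t-k) / φ n) / ((t-1).descFactorial k : ℝ) ≤
        1 / (outDeg n E n : ℝ)) :=
  stmt12_general n t E φ ψ hD ht5 htn hedge htmax hψ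

end PR
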